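/- Let ε₁,…,εₘ ∈ {+1, −1} and define, for smooth complex-valued functions on an open subset U ⊆ ℝᵐ, the semi-Riemannian Laplacian τ_ε(φ) = Σ_{k=1}^m εₖ ∂²φ/∂xₖ² and conformality operator κ_ε(φ,ψ) = Σ_{k=1}^m εₖ (∂φ/∂xₖ)(∂ψ/∂xₖ). If P, Q : U → ℂ are smooth with τ_ε(P) = 0, τ_ε(Q) = 0 and κ_ε(P,P) = 0, κ_ε(P,Q) = 0, κ_ε(Q,Q) = 0 on U, then the quotient Φ = P/Q satisfies τ_ε(Φ) = 0 and κ_ε(Φ,Φ) = 0 on the open set U ∩ {x : Q(x) ≠ 0}. -/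

import Mathlib

/-- The partial derivative in direction `k` of a complex-valued function on `ℝᵐ`. -/
noncomputable def pd {m : ℕ} (k : Fin m) (f : (Fin m → ℝ) → ℂ) : (Fin m → ℝ) → ℂ :=
  fun x => fderiv ℝ f x (Pi.single k 1)

/-- The Euclidean Laplacian `Δf = ∑ₖ ∂²f/∂xₖ²`. -/
noncomputable def lap {m : ℕ} (f : (Fin m → ℝ) → ℂ) : (Fin m → ℝ) → ℂ :=
  fun x => ∑ k : Fin m, pd k (pd k f) x

/-- The conformality operator `κ(f,g) = ∑ₖ (∂f/∂xₖ)(∂g/∂xₖ)`. -/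
noncomputable def conf {m : ℕ} (f g : (Fin m → ℝ) → ℂ) : (Fin m → ℝ) → ℂ :=
  fun x => ∑ k : Fin m, pd k f x * pd k g x

/-- The semi-Riemannian Laplacian on `ℝᵐ` with signs `ε`. -/
noncomputable def lapS {m : ℕ} (ε : Fin m → ℝ) (f : (Fin m → ℝ) → ℂ) :
    (Fin m → ℝ) → ℂ :=
  fun x => ∑ k : Fin m, (ε k : ℂ) * pd k (pd k f) x

/-- The semi-Riemannian conformality operator on `ℝᵐ` with signs `ε`. -/
noncomputable def confS {m : ℕ} (ε : Fin m → ℝ) (f g : (Fin m → ℝ) → ℂ) :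
    (Fin m → ℝ) → ℂ :=
  fun x => ∑ k : Fin m, (ε k : ℂ) * (pd k f x * pd k g x)

open Filter Topology

lemma pd_congr {m : ℕ} (k : Fin m) {f g : (Fin m → ℝ) → ℂ} {V : Set (Fin m → ℝ)}
    {x : Fin m → ℝ} (hV : IsOpen V) (hx : x ∈ V) (h : ∀ y ∈ V, f y = g y) :
    pd k f x = pd k g x := by
  unfold pd
  rw [Filter.EventuallyEq.fderiv_eq (Filter.eventuallyEq_of_mem (hV.mem_nhds hx) h)]

lemma pd_contDiffOn {m : ℕ} (k : Fin m) {f : (Fin m → ℝ) → ℂ} {V : Set (Fin m → ℝ)}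
    (hV : IsOpen V) (hf : ContDiffOn ℝ (⊤ : ℕ∞) f V) : ContDiffOn ℝ (⊤ : ℕ∞) (pd k f) V := by
  have h1 : ContDiffOn ℝ (⊤ : ℕ∞) (fderiv ℝ f) V := hf.fderiv_of_isOpen hV (by simp)
  exact h1.clm_apply contDiffOn_const

lemma diffAt_of_contDiffOn {m : ℕ} {f : (Fin m → ℝ) → ℂ} {V : Set (Fin m → ℝ)}
    {x : Fin m → ℝ} (hV : IsOpen V) (hf : ContDiffOn ℝ (⊤ : ℕ∞) f V) (hx : x ∈ V) :
    DifferentiableAt ℝ f x :=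
  (hf.contDiffAt (hV.mem_nhds hx)).differentiableAt (by simp)

lemma pd_mul {m : ℕ} (k : Fin m) {f g : (Fin m → ℝ) → ℂ} {x : Fin m → ℝ}
    (hf : DifferentiableAt ℝ f x) (hg : DifferentiableAt ℝ g x) :
    pd k (fun y => f y * g y) x = pd k f x * g x + f x * pd k g x := by
  unfold pd
  rw [fderiv_fun_mul hf hg]
  simp only [ContinuousLinearMap.add_apply, ContinuousLinearMap.smul_apply, smul_eq_mul]
  ring

lemma pd_add {m : ℕ} (k : Fin m) {f g : (Fin m → ℝ) → ℂ} {x : Fin m → ℝ}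
    (hf : DifferentiableAt ℝ f x) (hg : DifferentiableAt ℝ g x) :
    pd k (fun y => f y + g y) x = pd k f x + pd k g x := by
  unfold pd
  rw [fderiv_fun_add hf hg]
  simp

theorem stmt16 (m : ℕ) (ε : Fin m → ℝ) (hε : ∀ k, ε k = 1 ∨ ε k = -1)
    (U : Set (Fin m → ℝ)) (hU : IsOpen U)
    (P Q : (Fin m → ℝ) → ℂ)
    (hP : ContDiffOn ℝ (⊤ : ℕ∞) P U) (hQ : ContDiffOn ℝ (⊤ : ℕ∞) Q U)
    (hPl : ∀ x ∈ U, lapS ε P x = 0) (hQl : ∀ x ∈ U, lapS ε Q x = 0)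
    (hPP : ∀ x ∈ U, confS ε P P x = 0) (hPQ : ∀ x ∈ U, confS ε P Q x = 0)
    (hQQ : ∀ x ∈ U, confS ε Q Q x = 0) :
    ∀ x ∈ U, Q x ≠ 0 →
      lapS ε (fun y => P y / Q y) x = 0 ∧
      confS ε (fun y => P y / Q y) (fun y => P y / Q y) x = 0 := by
  intro x hxU hxQ
  set V : Set (Fin m → ℝ) := U ∩ Q ⁻¹' {0}ᶜ with hVdef
  have hVopen : IsOpen V := hQ.continuousOn.isOpen_inter_preimage hU isOpen_compl_singleton
  have hVU : V ⊆ U := Set.inter_subset_left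
  have hxV : x ∈ V := ⟨hxU, hxQ⟩
  set Φ : (Fin m → ℝ) → ℂ := fun y => P y / Q y with hΦdef
  have hPV : ContDiffOn ℝ (⊤ : ℕ∞) P V := hP.mono hVU
  have hQV : ContDiffOn ℝ (⊤ : ℕ∞) Q V := hQ.mono hVU
  have hQne : ∀ y ∈ V, Q y ≠ 0 := fun y hy => hy.2
  have hΦV : ContDiffOn ℝ (⊤ : ℕ∞) Φ V := by
    have : ContDiffOn ℝ (⊤ : ℕ∞) (fun y => P y * (Q y)⁻¹) V := hPV.mul (hQV.inv hQne)
    exact this.congr fun y _ => (div_eq_mul_inv (P y) (Q y))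
  -- first derivative identity on V
  have key1 : ∀ y ∈ V, ∀ k : Fin m, pd k P y = pd k Φ y * Q y + Φ y * pd k Q y := by
    intro y hy k
    have h0 : pd k P y = pd k (fun z => Φ z * Q z) y :=
      pd_congr k hVopen hy (fun z hz => (div_mul_cancel₀ (P z) (hQne z hz)).symm)
    rw [h0, pd_mul k (diffAt_of_contDiffOn hVopen hΦV hy) (diffAt_of_contDiffOn hVopen hQV hy)]
  -- differentiability of the first derivatives at x
  have hdΦ : ∀ k : Fin m, DifferentiableAt ℝ (pd k Φ) x :=
    fun k => diffAt_of_contDiffOn hVopen (pd_contDiffOn k hVopen hΦV) hxV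
  have hdQ : ∀ k : Fin m, DifferentiableAt ℝ (pd k Q) x :=
    fun k => diffAt_of_contDiffOn hVopen (pd_contDiffOn k hVopen hQV) hxV
  have hdΦ0 : DifferentiableAt ℝ Φ x := diffAt_of_contDiffOn hVopen hΦV hxV
  have hdQ0 : DifferentiableAt ℝ Q x := diffAt_of_contDiffOn hVopen hQV hxV
  -- second derivative identity at x
  have key2 : ∀ k : Fin m, pd k (pd k P) x =
      pd k (pd k Φ) x * Q x + 2 * (pd k Φ x * pd k Q x) + Φ x * pd k (pd k Q) x := by
    intro k
    have h0 : pd k (pd k P) x = pd k (fun y => pd k Φ y * Q y + Φ y * pd k Q y) x :=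
      pd_congr k hVopen hxV (fun y hy => key1 y hy k)
    rw [h0, pd_add k (f := fun y => pd k Φ y * Q y) (g := fun y => Φ y * pd k Q y) ((hdΦ k).mul hdQ0) (hdΦ0.mul (hdQ k)),
        pd_mul k (hdΦ k) hdQ0, pd_mul k hdΦ0 (hdQ k)]
    ring
  -- expand the operators
  have hA : lapS ε P x =
      Q x * lapS ε Φ x + 2 * confS ε Φ Q x + Φ x * lapS ε Q x := by
    simp only [lapS, confS, Finset.mul_sum, ← Finset.sum_add_distrib]
    exact Finset.sum_congr rfl fun k _ => by rw [key2 k]; ring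
  have hB : confS ε P Q x = Q x * confS ε Φ Q x + Φ x * confS ε Q Q x := by
    simp only [confS, Finset.mul_sum, ← Finset.sum_add_distrib]
    exact Finset.sum_congr rfl fun k _ => by rw [key1 x hxV k]; ring
  have hC : confS ε P P x = Q x * Q x * confS ε Φ Φ x
      + 2 * (Φ x * Q x) * confS ε Φ Q x + Φ x * Φ x * confS ε Q Q x := by
    simp only [confS, Finset.mul_sum, ← Finset.sum_add_distrib]
    exact Finset.sum_congr rfl fun k _ => by rw [key1 x hxV k]; ring
  rw [hPQ x hxU, hQQ x hxU, mul_zero, add_zero] at hB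
  have hΦQ : confS ε Φ Q x = 0 := by
    rcases mul_eq_zero.1 hB.symm with h | h
    · exact absurd h hxQ
    · exact h
  rw [hPP x hxU, hΦQ, hQQ x hxU] at hC
  have hΦΦ : confS ε Φ Φ x = 0 := by
    have h1 : Q x * Q x * confS ε Φ Φ x = 0 := by linear_combination -hC
    rcases mul_eq_zero.1 h1 with h | h
    · exact absurd (mul_self_eq_zero.1 h) hxQ
    · exact h
  rw [hPl x hxU, hQl x hxU, hΦQ, mul_zero, add_zero, mul_zero, add_zero] at hA
  have hΦl : lapS ε Φ x = 0 := by
    rcases mul_eq_zero.1 hA.symm with h | h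
    · exact absurd h hxQ
    · exact h
  exact ⟨hΦl, hΦΦ⟩
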